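/- Fix a finite n ≥ 1. Then: (1) X_n^inj is a comeager subset of X_n and is invariant under the action a_n of (S_∞)^n; (2) for all x, y ∈ X_n^inj, x F_n y holds if and only if there exists g ∈ (S_∞)^n with g ·_{a_n} x = y (i.e., on X_n^inj the orbit equivalence relation of a_n is F_n). -/

import Mathlib

open MeasureTheory

/-- Iterated powerset type over Cantor space: `It 0 = 2^ℕ`, `It (m+1) = Set (It m)`. -/
def It : ℕ → Type
  | 0 => ℕ → Bool
  | m + 1 => Set (It m)

/-- `aF x m l` is the set `a^{x,l}_{m+1}` from the recursive construction. -/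
def aF (x : ℕ → ℕ → ℕ → Bool) : (m : ℕ) → ℕ → It (m + 1)
  | 0, l => {z : It 0 | ∃ k, x 1 l k = true ∧ z = x 0 k}
  | m + 1, l => {z : It (m + 1) | ∃ k, x (m + 2) l k = true ∧ z = aF x m k}

/-- `AS x m` is the set `A^x_{m+1}` from the recursive construction. -/
def AS (x : ℕ → ℕ → ℕ → Bool) : (m : ℕ) → It (m + 1)
  | 0 => {z : It 0 | ∃ k, z = x 0 k}
  | m + 1 => {z : It (m + 1) | ∃ k, z = aF x m k}

/-- Extension of a finite tuple to an infinite sequence, by a junk value. -/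
def extFin {n : ℕ} (x : Fin n → ℕ → ℕ → Bool) : ℕ → ℕ → ℕ → Bool :=
  fun i => if h : i < n then x ⟨i, h⟩ else fun _ _ => true

/-- The domain `X_n ⊆ ((2^ℕ)^ℕ)^n`. -/
def XSet (n : ℕ) : Set (Fin n → ℕ → ℕ → Bool) :=
  {x | ∀ (i : ℕ) (_ : 1 ≤ i) (hn : i < n),
    (∀ m, ∃ k, x ⟨i, hn⟩ k m = true) ∧
    (∀ k, ∃ m, x ⟨i, hn⟩ k m = true) ∧
    (∀ k l₁ l₂,
      x ⟨i - 1, Nat.lt_of_le_of_lt (Nat.sub_le i 1) hn⟩ l₁ =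
        x ⟨i - 1, Nat.lt_of_le_of_lt (Nat.sub_le i 1) hn⟩ l₂ →
      x ⟨i, hn⟩ k l₁ = x ⟨i, hn⟩ k l₂)}

/-- The domain `X_ω ⊆ ((2^ℕ)^ℕ)^ω`. -/
def XInf : Set (ℕ → ℕ → ℕ → Bool) :=
  {x | ∀ (i : ℕ) (_ : 1 ≤ i),
    (∀ m, ∃ k, x i k m = true) ∧
    (∀ k, ∃ m, x i k m = true) ∧
    (∀ k l₁ l₂, x (i - 1) l₁ = x (i - 1) l₂ → x i k l₁ = x i k l₂)}

/-- The relation `F_n` (`x F_n y ↔ A^x_n = A^y_n`), as a relation on the ambient space.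
For `n = 0` this is the trivial (full) relation. -/
def Ffin (n : ℕ) (x y : Fin n → ℕ → ℕ → Bool) : Prop :=
  AS (extFin x) (n - 1) = AS (extFin y) (n - 1)

/-- The relation `F_ω` : `x F_ω y ↔ ∀ k ≥ 1, A^x_k = A^y_k`. -/
def Fomega (x y : ℕ → ℕ → ℕ → Bool) : Prop :=
  ∀ m, AS x m = AS y m

/-- The projection `u^n_k` to the first `k` coordinates. -/
def projFin {n : ℕ} (k : ℕ) (h : k ≤ n) (x : Fin n → ℕ → ℕ → Bool) :
    Fin k → ℕ → ℕ → Bool :=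
  fun i => x (Fin.castLE h i)

/-- The projection `u^ω_k` to the first `k` coordinates. -/
def projInf (k : ℕ) (x : ℕ → ℕ → ℕ → Bool) : Fin k → ℕ → ℕ → Bool :=
  fun i => x i.val

theorem projFin_mem {n k : ℕ} (h : k ≤ n) {x : Fin n → ℕ → ℕ → Bool}
    (hx : x ∈ XSet n) : projFin k h x ∈ XSet k :=
  fun i h1 hik => hx i h1 (lt_of_lt_of_le hik h)

theorem projInf_mem (k : ℕ) {x : ℕ → ℕ → ℕ → Bool} (hx : x ∈ XInf) :
    projInf k x ∈ XSet k :=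
  fun i h1 _ => hx i h1

def projSubFin {n : ℕ} (k : ℕ) (h : k ≤ n) (x : ↥(XSet n)) : ↥(XSet k) :=
  ⟨projFin k h x.1, projFin_mem h x.2⟩

def projSubInf (k : ℕ) (x : ↥XInf) : ↥(XSet k) :=
  ⟨projInf k x.1, projInf_mem k x.2⟩

/-- The domains of the iterated Friedman–Stanley jumps. -/
def fsSpace : ℕ → Type
  | 0 => ℕ → Bool
  | n + 1 => ℕ → fsSpace n

/-- The Friedman–Stanley jump of an equivalence relation. -/
def fsJump {X : Type} (E : X → X → Prop) (x y : ℕ → X) : Prop :=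
  (∀ n, ∃ m, E (x n) (y m)) ∧ (∀ n, ∃ m, E (y n) (x m))

/-- The iterated Friedman–Stanley jump `=^{+n}`. -/
def fsIter : (n : ℕ) → fsSpace n → fsSpace n → Prop
  | 0 => Eq
  | n + 1 => fsJump (fsIter n)

instance fsSpaceTopologicalSpace : (n : ℕ) → TopologicalSpace (fsSpace n)
  | 0 => inferInstanceAs (TopologicalSpace (ℕ → Bool))
  | n + 1 =>
    letI := fsSpaceTopologicalSpace n
    inferInstanceAs (TopologicalSpace (ℕ → fsSpace n))

instance fsSpaceMeasurableSpace : (n : ℕ) → MeasurableSpace (fsSpace n)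
  | 0 => inferInstanceAs (MeasurableSpace (ℕ → Bool))
  | n + 1 =>
    letI := fsSpaceMeasurableSpace n
    inferInstanceAs (MeasurableSpace (ℕ → fsSpace n))

/-- `=^{+ω}`, the product of the `=^{+k}`. -/
def fsOmega (x y : ∀ k, fsSpace k) : Prop :=
  ∀ k, fsIter k (x k) (y k)

/-- Borel reducibility of equivalence relations. -/
def BorelReducible {X Y : Type*} [MeasurableSpace X] [MeasurableSpace Y]
    (E : X → X → Prop) (F : Y → Y → Prop) : Prop :=
  ∃ f : X → Y, Measurable f ∧ ∀ a b, E a b ↔ F (f a) (f b)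

/-- The Polish topology of pointwise convergence on the symmetric group of a
(countable, discrete) set. -/
def permTopology (A : Type*) : TopologicalSpace (Equiv.Perm A) :=
  TopologicalSpace.induced (fun g => (g : A → A))
    (@Pi.topologicalSpace A (fun _ => A) fun _ => ⊥)

/-- The orbit equivalence relation of an action. -/
def OrbitRel {G Y : Type*} (act : G → Y → Y) (y₁ y₂ : Y) : Prop :=
  ∃ g, act g y₁ = y₂

/-- Classifiable by countable structures: Borel reducible to the orbit equivalence
relation of a continuous action of `S_∞` on a Polish space. -/
def ClassifiableByCountableStructures {X : Type*} [MeasurableSpace X]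
    (E : X → X → Prop) : Prop :=
  ∃ (Y : Type) (_ : TopologicalSpace Y) (_ : MeasurableSpace Y),
    PolishSpace Y ∧ BorelSpace Y ∧
    ∃ act : Equiv.Perm ℕ → Y → Y,
      (∀ y, act 1 y = y) ∧
      (∀ g h y, act (g * h) y = act g (act h y)) ∧
      (letI := permTopology ℕ
       Continuous fun p : Equiv.Perm ℕ × Y => act p.1 p.2) ∧
      BorelReducible E (OrbitRel act)

/-- `E` is prime to `F`. -/
def PrimeTo {X Y : Type*} [MeasurableSpace X] [MeasurableSpace Y]
    (E : X → X → Prop) (F : Y → Y → Prop) : Prop :=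
  ∀ f : X → Y, Measurable f → (∀ a b, E a b → F (f a) (f b)) →
    ∃ y : Y, BorelReducible E (fun a b : {x : X // F (f x) y} => E a.1 b.1)

/-- A sequence of elements of Cantor space is separated if any two distinct naturals
are separated by some member of the sequence. -/
def SeqSeparated (z : ℕ → ℕ → Bool) : Prop :=
  ∀ a b : ℕ, a ≠ b → ∃ i, z i a ≠ z i b

/-- The action `a` of `S_∞` on `(2^ℕ)^ℕ`, permuting the sequence: `(g·x)(k) = x(g⁻¹ k)`. -/
def actA (g : Equiv.Perm ℕ) (x : ℕ → ℕ → Bool) : ℕ → ℕ → Bool :=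
  fun k => x (g⁻¹ k)

/-- The action `c` of `S_∞ × S_∞` on `(2^ℕ)^ℕ`: `((g,h)·x)(k)(m) = x(h⁻¹ k)(g⁻¹ m)`. -/
def actC (g h : Equiv.Perm ℕ) (x : ℕ → ℕ → Bool) : ℕ → ℕ → Bool :=
  fun k m => x (h⁻¹ k) (g⁻¹ m)

/-- The action `a_n` of `(S_∞)^n` on `((2^ℕ)^ℕ)^n`:
`(g·x)(0) = g(0) ·_a x(0)` and `(g·x)(k+1) = (g(k), g(k+1)) ·_c x(k+1)`. -/
def actAn {n : ℕ} (g : Fin n → Equiv.Perm ℕ) (x : Fin n → ℕ → ℕ → Bool) :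
    Fin n → ℕ → ℕ → Bool :=
  fun i =>
    if _ : i.val = 0 then actA (g i) (x i)
    else actC (g ⟨i.val - 1, Nat.lt_of_le_of_lt (Nat.sub_le _ _) i.isLt⟩) (g i) (x i)

/-- `X_n^inj`: the elements of `X_n` for which `x(0)` is an injective enumeration of
`A^x_1` and, for `1 ≤ k < n`, `l ↦ a^{x,l}_k` is an injective enumeration of `A^x_{k+1}`. -/
def XInjFin (n : ℕ) : Set (Fin n → ℕ → ℕ → Bool) :=
  {x | x ∈ XSet n ∧ Function.Injective (extFin x 0) ∧
    ∀ k : ℕ, 1 ≤ k → k < n → Function.Injective fun l => aF (extFin x) (k - 1) l}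

/-! ### Auxiliary machinery -/

/-- The defeq `It (j+1) = Set (It j)` as a function, to help elaboration. -/
def ItS {j : ℕ} (s : It (j + 1)) : Set (It j) := s

/-- Uniform enumeration: `enum X 0 = X 0`, `enum X (j+1) = aF X j`. -/
def enum (X : ℕ → ℕ → ℕ → Bool) : (j : ℕ) → ℕ → It j
  | 0 => X 0
  | j + 1 => aF X j

lemma bool_eq_of_iff {a b : Bool} (h : a = true ↔ b = true) : a = b := by
  cases a <;> cases b <;> simp_all

lemma aF_eq_enum (X : ℕ → ℕ → ℕ → Bool) (j : ℕ) (l : ℕ) :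
    ItS (aF X j l) = {z : It j | ∃ k, X (j + 1) l k = true ∧ z = enum X j k} := by
  cases j <;> rfl

lemma AS_eq_enum (X : ℕ → ℕ → ℕ → Bool) (j : ℕ) :
    ItS (AS X j) = {z : It j | ∃ k, z = enum X j k} := by
  cases j <;> rfl

lemma mem_aF_iff {X : ℕ → ℕ → ℕ → Bool} {j : ℕ}
    (hinj : Function.Injective (enum X j)) (l m : ℕ) :
    enum X j m ∈ ItS (aF X j l) ↔ X (j + 1) l m = true := by
  rw [aF_eq_enum]
  constructor
  · rintro ⟨k, hk, he⟩
    rwa [hinj he]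
  · intro h
    exact ⟨m, h, rfl⟩

lemma enum_injective (X : ℕ → ℕ → ℕ → Bool) :
    ∀ j, (∀ i, i ≤ j → Function.Injective (X i)) → Function.Injective (enum X j) := by
  intro j
  induction j with
  | zero => exact fun h => h 0 le_rfl
  | succ m ih =>
    intro h l₁ l₂ hl
    have hm : Function.Injective (enum X m) := ih fun i hi => h i (by omega)
    have : X (m + 1) l₁ = X (m + 1) l₂ := by
      funext k
      apply bool_eq_of_iff
      rw [← mem_aF_iff hm l₁ k, ← mem_aF_iff hm l₂ k]
      show enum X m k ∈ ItS (enum X (m+1) l₁) ↔ enum X m k ∈ ItS (enum X (m+1) l₂)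
      rw [hl]
    exact h (m + 1) le_rfl this

lemma extFin_apply {n : ℕ} (x : Fin n → ℕ → ℕ → Bool) {i : ℕ} (h : i < n) :
    extFin x i = x ⟨i, h⟩ := dif_pos h

lemma mem_XSet_iff {n : ℕ} (x : Fin n → ℕ → ℕ → Bool) :
    x ∈ XSet n ↔ ∀ i, 1 ≤ i → i < n →
      ((∀ m, ∃ k, extFin x i k m = true) ∧
       (∀ k, ∃ m, extFin x i k m = true) ∧
       (∀ k l₁ l₂, extFin x (i - 1) l₁ = extFin x (i - 1) l₂ →
          extFin x i k l₁ = extFin x i k l₂)) := by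
  constructor
  · intro H i h1 h2
    rw [extFin_apply x h2, extFin_apply x (Nat.lt_of_le_of_lt (Nat.sub_le i 1) h2)]
    exact H i h1 h2
  · intro H i h1 h2
    have := H i h1 h2
    rwa [extFin_apply x h2, extFin_apply x (Nat.lt_of_le_of_lt (Nat.sub_le i 1) h2)] at this

lemma mem_XInjFin_iff {n : ℕ} (hn : 1 ≤ n) (x : Fin n → ℕ → ℕ → Bool) :
    x ∈ XInjFin n ↔ x ∈ XSet n ∧ ∀ j, j < n → Function.Injective (enum (extFin x) j) := by
  constructor
  · rintro ⟨h1, h2, h3⟩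
    refine ⟨h1, fun j hj => ?_⟩
    match j with
    | 0 => exact h2
    | m + 1 =>
      have := h3 (m + 1) (by omega) hj
      exact this
  · rintro ⟨h1, h2⟩
    refine ⟨h1, h2 0 hn, fun k hk1 hkn => ?_⟩
    obtain ⟨m, rfl⟩ : ∃ m, k = m + 1 := ⟨k - 1, by omega⟩
    have := h2 (m + 1) hkn
    exact this

/-- transfer of `enum` along a coordinatewise permutation action -/
lemma enum_act (X Y : ℕ → ℕ → ℕ → Bool) (G : ℕ → Equiv.Perm ℕ)
    (h0 : ∀ k, Y 0 k = X 0 ((G 0)⁻¹ k)) :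
    ∀ j, (∀ i, 1 ≤ i → i ≤ j → ∀ k m, Y i k m = X i ((G i)⁻¹ k) ((G (i - 1))⁻¹ m)) →
      ∀ k, enum Y j k = enum X j ((G j)⁻¹ k) := by
  intro j
  induction j with
  | zero => exact fun _ k => h0 k
  | succ m ih =>
    intro h k
    have ihm := ih fun i hi1 hi2 => h i hi1 (by omega)
    show aF Y m k = aF X m ((G (m+1))⁻¹ k)
    show ItS (aF Y m k) = ItS (aF X m ((G (m+1))⁻¹ k))
    rw [aF_eq_enum, aF_eq_enum]
    ext z
    simp only [Set.mem_setOf_eq]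
    constructor
    · rintro ⟨k', hk', rfl⟩
      refine ⟨(G m)⁻¹ k', ?_, ?_⟩
      · have := h (m + 1) (by omega) le_rfl k k'
        simp only [Nat.add_sub_cancel] at this
        rwa [this] at hk'
      · exact ihm k'
    · rintro ⟨k', hk', rfl⟩
      refine ⟨G m k', ?_, ?_⟩
      · have := h (m + 1) (by omega) le_rfl k (G m k')
        simp only [Nat.add_sub_cancel, show ∀ (f : Equiv.Perm ℕ) x, f⁻¹ (f x) = x from fun f x => f.symm_apply_apply x] at this
        rw [this]; exact hk'
      · rw [ihm (G m k')]
        simp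

/-- Open sets in the product contain cylinders. -/
lemma cylinder {n : ℕ} {V : Set (Fin n → ℕ → ℕ → Bool)} (hV : IsOpen V)
    {x : Fin n → ℕ → ℕ → Bool} (hx : x ∈ V) :
    ∃ N, ∀ y : Fin n → ℕ → ℕ → Bool,
      (∀ (i : Fin n) (k m : ℕ), k < N → m < N → y i k m = x i k m) → y ∈ V := by
  by_contra h
  push_neg at h
  choose y hy hyV using h
  have ht : Filter.Tendsto y Filter.atTop (nhds x) := by
    rw [tendsto_pi_nhds]; intro i
    rw [tendsto_pi_nhds]; intro k
    rw [tendsto_pi_nhds]; intro m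
    apply Filter.Tendsto.congr' _ tendsto_const_nhds
    filter_upwards [Filter.eventually_ge_atTop (max k m + 1)] with N hN
    exact (hy N i k m (by omega) (by omega)).symm
  obtain ⟨N, hN⟩ := (ht.eventually_mem (hV.mem_nhds hx)).exists
  exact hyV N hN

/-- Two injective enumerations of the same set differ by a permutation. -/
lemma exists_perm_comp {α : Type*} (f g : ℕ → α)
    (hf : Function.Injective f) (hg : Function.Injective g)
    (h : {z | ∃ k, z = f k} = {z | ∃ k, z = g k}) :
    ∃ e : Equiv.Perm ℕ, ∀ k, g k = f (e k) := by
  have h1 : ∀ k, ∃ k', g k = f k' := by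
    intro k
    have : g k ∈ {z | ∃ k', z = f k'} := by rw [h]; exact ⟨k, rfl⟩
    exact this
  choose H hH using h1
  have hinj : Function.Injective H := fun a b hab => hg (by rw [hH a, hH b, hab])
  have hsurj : Function.Surjective H := by
    intro k'
    have : f k' ∈ {z | ∃ k, z = g k} := by rw [← h]; exact ⟨k', rfl⟩
    obtain ⟨k, hk⟩ := this
    exact ⟨k, hf (by rw [← hH k, ← hk])⟩
  exact ⟨Equiv.ofBijective H ⟨hinj, hsurj⟩, hH⟩

/-- Going down one level in the `AS` hierarchy. -/
lemma AS_step_down (X Y : ℕ → ℕ → ℕ → Bool) (j : ℕ)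
    (h1x : ∀ m, ∃ k, X (j + 1) k m = true) (h1y : ∀ m, ∃ k, Y (j + 1) k m = true)
    (h : AS X (j + 1) = AS Y (j + 1)) : AS X j = AS Y j := by
  have key : ∀ (Z : ℕ → ℕ → ℕ → Bool), (∀ m, ∃ k, Z (j + 1) k m = true) →
      ItS (AS Z j) = {z : It j | ∃ l, z ∈ ItS (aF Z j l)} := by
    intro Z h1
    rw [AS_eq_enum]
    ext z
    simp only [Set.mem_setOf_eq]
    constructor
    · rintro ⟨k, rfl⟩
      obtain ⟨l, hl⟩ := h1 k
      exact ⟨l, by rw [aF_eq_enum]; exact ⟨k, hl, rfl⟩⟩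
    · rintro ⟨l, hz⟩
      rw [aF_eq_enum] at hz
      obtain ⟨k, _, rfl⟩ := hz
      exact ⟨k, rfl⟩
  have hXY : ∀ l, ∃ l', aF X j l = aF Y j l' := by
    intro l
    have : aF X j l ∈ ItS (AS Y (j + 1)) := by
      rw [← h, AS_eq_enum]
      exact ⟨l, rfl⟩
    rw [AS_eq_enum] at this
    exact this
  have hYX : ∀ l, ∃ l', aF Y j l = aF X j l' := by
    intro l
    have : aF Y j l ∈ ItS (AS X (j + 1)) := by
      rw [h, AS_eq_enum]
      exact ⟨l, rfl⟩
    rw [AS_eq_enum] at this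
    exact this
  show ItS (AS X j) = ItS (AS Y j)
  rw [key X h1x, key Y h1y]
  ext z
  simp only [Set.mem_setOf_eq]
  constructor
  · rintro ⟨l, hz⟩
    obtain ⟨l', hl'⟩ := hXY l
    exact ⟨l', by rw [show aF Y j l' = aF X j l from hl'.symm]; exact hz⟩
  · rintro ⟨l, hz⟩
    obtain ⟨l', hl'⟩ := hYX l
    exact ⟨l', by rw [show aF X j l' = aF Y j l from hl'.symm]; exact hz⟩

lemma dense_ne_cols {n : ℕ} (hn : 1 ≤ n) (i : Fin n) (l₁ l₂ : ℕ) (hl : l₁ ≠ l₂) :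
    Dense {x : ↥(XSet n) | x.1 i l₁ ≠ x.1 i l₂} := by
  rw [dense_iff_inter_open]
  rintro U hU ⟨x₀, hx₀U⟩
  obtain ⟨V, hVopen, hVU⟩ := isOpen_induced_iff.mp hU
  have hx₀V : x₀.1 ∈ V := by rw [← hVU] at hx₀U; exact hx₀U
  obtain ⟨N, hN⟩ := cylinder hVopen hx₀V
  set y : Fin n → ℕ → ℕ → Bool := fun i' k m =>
    if m < N then (if k < N then x₀.1 i' k m else true) else decide (m = N + k) with hy
  have colinj : ∀ (i' : Fin n) (k₁ k₂ : ℕ), y i' k₁ = y i' k₂ → k₁ = k₂ := by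
    intro i' k₁ k₂ h
    have h1 := congrFun h (N + k₁)
    simp only [hy] at h1
    rw [if_neg (by omega), if_neg (by omega)] at h1
    simp at h1
    omega
  have hyX : y ∈ XSet n := by
    intro i' h1 hn'
    refine ⟨?_, ?_, ?_⟩
    · intro m
      by_cases hm : m < N
      · refine ⟨N, ?_⟩
        simp only [hy]
        rw [if_pos hm, if_neg (by omega)]
      · refine ⟨m - N, ?_⟩
        simp only [hy]
        rw [if_neg hm]
        simp only [decide_eq_true_eq]
        omega
    · intro k
      refine ⟨N + k, ?_⟩
      simp only [hy]
      rw [if_neg (by omega)]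
      simp
    · intro k l₁' l₂' hl'
      have := colinj _ l₁' l₂' hl'
      subst this; rfl
  have hyV : y ∈ V := by
    apply hN
    intro i' k m hk hm
    simp only [hy]
    rw [if_pos hm, if_pos hk]
  refine ⟨⟨y, hyX⟩, ?_, ?_⟩
  · rw [← hVU]; exact hyV
  · intro hcontr
    exact hl (colinj i l₁ l₂ hcontr)

lemma part1 (n : ℕ) (hn : 1 ≤ n) :
    {x : ↥(XSet n) | x.1 ∈ XInjFin n} ∈ residual ↥(XSet n) := by
  have big : (⋂ (i : Fin n) (l₁ : ℕ) (l₂ : ℕ),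
      {x : ↥(XSet n) | l₁ ≠ l₂ → x.1 i l₁ ≠ x.1 i l₂}) ∈ residual ↥(XSet n) := by
    rw [countable_iInter_mem]; intro i
    rw [countable_iInter_mem]; intro l₁
    rw [countable_iInter_mem]; intro l₂
    by_cases hl : l₁ = l₂
    · have : {x : ↥(XSet n) | l₁ ≠ l₂ → x.1 i l₁ ≠ x.1 i l₂} = Set.univ := by
        ext z; simp [hl]
      rw [this]; exact Filter.univ_mem
    · refine Filter.mem_of_superset
        (residual_of_dense_open ?_ (dense_ne_cols hn i l₁ l₂ hl)) (fun z hz _ => hz)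
      have hopen : IsOpen {z : Fin n → ℕ → ℕ → Bool | z i l₁ ≠ z i l₂} := by
        apply isOpen_ne_fun
        · exact (continuous_apply l₁).comp (continuous_apply i)
        · exact (continuous_apply l₂).comp (continuous_apply i)
      exact hopen.preimage continuous_subtype_val
  refine Filter.mem_of_superset big ?_
  intro x hx
  simp only [Set.mem_iInter] at hx
  show x.1 ∈ XInjFin n
  rw [mem_XInjFin_iff hn]
  refine ⟨x.2, fun j hj => ?_⟩
  apply enum_injective
  intro i' hi'
  rw [extFin_apply x.1 (show i' < n by omega)]
  intro k₁ k₂ hk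
  by_contra hne
  exact hx ⟨i', by omega⟩ k₁ k₂ hne hk

lemma actAn_zero {n : ℕ} (g : Fin n → Equiv.Perm ℕ) (x : Fin n → ℕ → ℕ → Bool)
    (i : Fin n) (hi : i.val = 0) : actAn g x i = actA (g i) (x i) := dif_pos hi

lemma actAn_pos {n : ℕ} (g : Fin n → Equiv.Perm ℕ) (x : Fin n → ℕ → ℕ → Bool)
    (i : Fin n) (hi : ¬ i.val = 0) :
    actAn g x i =
      actC (g ⟨i.val - 1, Nat.lt_of_le_of_lt (Nat.sub_le _ _) i.isLt⟩) (g i) (x i) :=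
  dif_neg hi

lemma actAn_formulas {n : ℕ} (hn : 1 ≤ n) (g : Fin n → Equiv.Perm ℕ)
    (x : Fin n → ℕ → ℕ → Bool) :
    ∃ G : ℕ → Equiv.Perm ℕ,
      (∀ k, extFin (actAn g x) 0 k = extFin x 0 ((G 0)⁻¹ k)) ∧
      (∀ i, 1 ≤ i → i < n → ∀ k m,
        extFin (actAn g x) i k m = extFin x i ((G i)⁻¹ k) ((G (i - 1))⁻¹ m)) := by
  refine ⟨fun j => if h : j < n then g ⟨j, h⟩ else 1, ?_, ?_⟩
  · intro k
    have h0n : (0 : ℕ) < n := by omega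
    rw [extFin_apply _ h0n, extFin_apply _ h0n,
      actAn_zero g x ⟨0, h0n⟩ rfl]
    show x ⟨0, h0n⟩ ((g ⟨0, h0n⟩)⁻¹ k) = x ⟨0, h0n⟩ ((if h : (0:ℕ) < n then g ⟨0, h⟩ else 1)⁻¹ k)
    rw [dif_pos h0n]
  · intro i h1 h2 k m
    rw [extFin_apply _ h2, extFin_apply _ h2,
      actAn_pos g x ⟨i, h2⟩ (by simpa using Nat.one_le_iff_ne_zero.mp h1)]
    show x ⟨i, h2⟩ ((g ⟨i, h2⟩)⁻¹ k)
        ((g ⟨i - 1, Nat.lt_of_le_of_lt (Nat.sub_le _ _) h2⟩)⁻¹ m) = _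
    beta_reduce
    rw [dif_pos h2, dif_pos (show i - 1 < n by omega)]
  
lemma part2 {n : ℕ} (hn : 1 ≤ n) (g : Fin n → Equiv.Perm ℕ)
    (x : Fin n → ℕ → ℕ → Bool) (hx : x ∈ XInjFin n) : actAn g x ∈ XInjFin n := by
  rw [mem_XInjFin_iff hn] at hx ⊢
  obtain ⟨hxX, hxinj⟩ := hx
  obtain ⟨G, h0, hsucc⟩ := actAn_formulas hn g x
  constructor
  · rw [mem_XSet_iff]
    intro i' h1 h2
    have hc := (mem_XSet_iff x).mp hxX i' h1 h2
    refine ⟨?_, ?_, ?_⟩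
    · intro m
      obtain ⟨k, hk⟩ := hc.1 ((G (i' - 1))⁻¹ m)
      refine ⟨G i' k, ?_⟩
      rw [hsucc i' h1 h2]
      simpa using hk
    · intro k
      obtain ⟨m, hm⟩ := hc.2.1 ((G i')⁻¹ k)
      refine ⟨G (i' - 1) m, ?_⟩
      rw [hsucc i' h1 h2]
      simpa using hm
    · intro k l₁ l₂ hl
      rw [hsucc i' h1 h2 k l₁, hsucc i' h1 h2 k l₂]
      apply hc.2.2
      rcases Nat.lt_or_ge i' 2 with hi2 | hi2
      · have hi1 : i' = 1 := by omega
        subst hi1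
        funext m'
        have e := congrFun (congrFun (congrArg extFin (rfl : actAn g x = actAn g x)) 0) l₁
        rw [h0 l₁, h0 l₂] at hl
        simp only [Nat.sub_self]
        rw [hl]
      · funext m'
        have e₁ := hsucc (i' - 1) (by omega) (by omega) l₁ (G (i' - 1 - 1) m')
        have e₂ := hsucc (i' - 1) (by omega) (by omega) l₂ (G (i' - 1 - 1) m')
        simp only [show ∀ (f : Equiv.Perm ℕ) x, f⁻¹ (f x) = x from fun f x => f.symm_apply_apply x] at e₁ e₂
        rw [← e₁, ← e₂, hl]
  · intro j hj
    have hfor : ∀ k, enum (extFin (actAn g x)) j k = enum (extFin x) j ((G j)⁻¹ k) :=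
      enum_act (extFin x) (extFin (actAn g x)) G h0 j
        (fun i hi1 hi2 => hsucc i hi1 (by omega))
    intro k₁ k₂ hk
    rw [hfor k₁, hfor k₂] at hk
    have := hxinj j hj hk
    simpa using congrArg (G j) this

lemma part3_mpr {n : ℕ} (hn : 1 ≤ n) (g : Fin n → Equiv.Perm ℕ)
    (x : Fin n → ℕ → ℕ → Bool) : Ffin n x (actAn g x) := by
  obtain ⟨G, h0, hsucc⟩ := actAn_formulas hn g x
  have hfor : ∀ k, enum (extFin (actAn g x)) (n - 1) k
      = enum (extFin x) (n - 1) ((G (n - 1))⁻¹ k) :=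
    enum_act (extFin x) (extFin (actAn g x)) G h0 (n - 1)
      (fun i hi1 hi2 => hsucc i hi1 (by omega))
  show AS (extFin x) (n - 1) = AS (extFin (actAn g x)) (n - 1)
  show ItS (AS (extFin x) (n - 1)) = ItS (AS (extFin (actAn g x)) (n - 1))
  rw [AS_eq_enum, AS_eq_enum]
  ext z
  simp only [Set.mem_setOf_eq]
  constructor
  · rintro ⟨k, rfl⟩
    refine ⟨G (n - 1) k, ?_⟩
    rw [hfor (G (n - 1) k)]
    simp
  · rintro ⟨k, rfl⟩
    exact ⟨(G (n - 1))⁻¹ k, hfor k⟩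

lemma part3_mp {n : ℕ} (hn : 1 ≤ n) (x y : Fin n → ℕ → ℕ → Bool)
    (hx : x ∈ XInjFin n) (hy : y ∈ XInjFin n) (hF : Ffin n x y) :
    ∃ g : Fin n → Equiv.Perm ℕ, actAn g x = y := by
  rw [mem_XInjFin_iff hn] at hx hy
  have hXc := (mem_XSet_iff x).mp hx.1
  have hYc := (mem_XSet_iff y).mp hy.1
  set X := extFin x with hXdef
  set Y := extFin y with hYdef
  -- AS equality at all levels below n
  have hAS : ∀ d, d ≤ n - 1 → AS X (n - 1 - d) = AS Y (n - 1 - d) := by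
    intro d
    induction d with
    | zero => intro _; exact hF
    | succ d ih =>
      intro hd
      have h1 : n - 1 - d = (n - 1 - (d + 1)) + 1 := by omega
      have hprev := ih (by omega)
      rw [h1] at hprev
      exact AS_step_down X Y _
        (fun m => (hXc ((n - 1 - (d + 1)) + 1) (by omega) (by omega)).1 m)
        (fun m => (hYc ((n - 1 - (d + 1)) + 1) (by omega) (by omega)).1 m) hprev
  have hASj : ∀ j, j < n → AS X j = AS Y j := by
    intro j hj
    have := hAS (n - 1 - j) (by omega)
    rwa [show n - 1 - (n - 1 - j) = j by omega] at this
  -- the matching permutations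
  have hE : ∀ j : Fin n, ∃ e : Equiv.Perm ℕ, ∀ k, enum Y j.val k = enum X j.val (e k) := by
    intro j
    apply exists_perm_comp (enum X j.val) (enum Y j.val) (hx.2 j.val j.isLt) (hy.2 j.val j.isLt)
    rw [← AS_eq_enum, ← AS_eq_enum, hASj j.val j.isLt]
  choose E hEp using hE
  refine ⟨fun i => (E i)⁻¹, ?_⟩
  funext i
  obtain ⟨iv, hvlt⟩ := i
  match iv, hvlt with
  | 0, hvlt =>
    rw [actAn_zero _ x ⟨0, hvlt⟩ rfl]
    funext k
    show x ⟨0, hvlt⟩ (((E ⟨0, hvlt⟩)⁻¹)⁻¹ k) = y ⟨0, hvlt⟩ k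
    rw [inv_inv]
    have := hEp ⟨0, hvlt⟩ k
    rw [show enum Y 0 k = y ⟨0, hvlt⟩ k from congrFun (extFin_apply y hvlt) k,
        show ∀ k', enum X 0 k' = x ⟨0, hvlt⟩ k' from fun k' => congrFun (extFin_apply x hvlt) k'] at this
    exact this.symm
  | jp + 1, hvlt =>
    rw [actAn_pos _ x ⟨jp + 1, hvlt⟩ (by simp)]
    funext k m
    have hjpn : jp < n := by omega
    show x ⟨jp + 1, hvlt⟩ (((E ⟨jp + 1, hvlt⟩)⁻¹)⁻¹ k) (((E ⟨jp, hjpn⟩)⁻¹)⁻¹ m)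
        = y ⟨jp + 1, hvlt⟩ k m
    rw [inv_inv, inv_inv]
    have iYinj : Function.Injective (enum Y jp) := hy.2 jp hjpn
    have iXinj : Function.Injective (enum X jp) := hx.2 jp hjpn
    have e1 : aF Y jp k = aF X jp (E ⟨jp + 1, hvlt⟩ k) := hEp ⟨jp + 1, hvlt⟩ k
    have e2 : enum Y jp m = enum X jp (E ⟨jp, hjpn⟩ m) := hEp ⟨jp, hjpn⟩ m
    have hxb : x ⟨jp + 1, hvlt⟩ (E ⟨jp + 1, hvlt⟩ k) (E ⟨jp, hjpn⟩ m)
        = X (jp + 1) (E ⟨jp + 1, hvlt⟩ k) (E ⟨jp, hjpn⟩ m) := by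
      rw [hXdef, extFin_apply x hvlt]
    have hyb : y ⟨jp + 1, hvlt⟩ k m = Y (jp + 1) k m := by
      rw [hYdef, extFin_apply y hvlt]
    rw [hxb, hyb]
    apply bool_eq_of_iff
    rw [← mem_aF_iff iXinj, ← mem_aF_iff iYinj, e2, e1]

/-- `X_n^inj` is a comeager, `a_n`-invariant subset of `X_n`, and on it
the orbit equivalence relation of `a_n` is exactly `F_n`. -/
theorem XInjFin_comeager_invariant_orbit (n : ℕ) (hn : 1 ≤ n) :
    ({x : ↥(XSet n) | x.1 ∈ XInjFin n} ∈ residual ↥(XSet n)) ∧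
    (∀ (g : Fin n → Equiv.Perm ℕ) (x : Fin n → ℕ → ℕ → Bool),
        x ∈ XInjFin n → actAn g x ∈ XInjFin n) ∧
    (∀ x y : Fin n → ℕ → ℕ → Bool, x ∈ XInjFin n → y ∈ XInjFin n →
        (Ffin n x y ↔ ∃ g : Fin n → Equiv.Perm ℕ, actAn g x = y)) := by
  refine ⟨part1 n hn, fun g x hx => part2 hn g x hx, fun x y hx hy => ?_⟩
  constructor
  · exact fun hF => part3_mp hn x y hx hy hF
  · rintro ⟨g, rfl⟩
    exact part3_mpr hn g x
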